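/- arXiv:1109.0078 — 6 statements merged into one kernel-verified Lean document; each statement's English description precedes it below -/
import Mathlib

section
/- Let B be an integer matrix whose columns form a lattice basis of ker_Z(A). Then the columns of the block matrix B^(r), having r block rows where for k = 1,...,r-1 the k-th block column has B in block row k and -B in block row r and zeros elsewhere, form a lattice basis of ker_Z(Λ^(r)(A)), the r-th Lawrence configuration of A. -/
open Matrix BigOperators

/-- The `r`-th Lawrence configuration of `A`: the first `r-1` block rows are
`(0,…,0,A,0,…,0)` (with `A` in block position `k`), and the last block row is `(I,…,I)`. -/
def LawrenceR (r m n : ℕ) (A : Matrix (Fin m) (Fin n) ℤ) :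
    Matrix ((Fin (r - 1) × Fin m) ⊕ Fin n) (Fin r × Fin n) ℤ :=
  fun p q =>
    Sum.elim (fun ka : Fin (r - 1) × Fin m =>
        if (q.1 : ℕ) = (ka.1 : ℕ) then A ka.2 q.2 else 0)
      (fun i : Fin n => if q.2 = i then 1 else 0) p

/-- Column `(k, j)` of the matrix `B^(r)`: block `B` in block row `k`, `-B` in the last
block row `r-1`, and zeros elsewhere. -/
def BrCol {r n l : ℕ} (B : Matrix (Fin n) (Fin l) ℤ) (k : Fin (r - 1)) (j : Fin l) :
    Fin r × Fin n → ℤ :=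
  fun q =>
    if (q.1 : ℕ) = (k : ℕ) then B q.2 j
    else if (q.1 : ℕ) = r - 1 then -B q.2 j else 0

/-!
A vector `z = (z₁, …, z_r)` lies in the kernel of `Λ^(r)(A)` exactly when `z₁, …, z_{r-1}` lie
in `ker A` and `z_r = -(z₁ + ⋯ + z_{r-1})`. Writing each `z_k = B c_k` for `k < r` then exhibits
`z` as the combination of the columns of `B^(r)` with coefficients `c_k`, and conversely every
column of `B^(r)` satisfies both conditions.
-/

section

variable {s m n l : ℕ}

theorem lawrenceR_mulVec_inl (A : Matrix (Fin m) (Fin n) ℤ) (v : Fin (s + 1) × Fin n → ℤ)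
    (k : Fin s) (a : Fin m) :
    (LawrenceR (s + 1) m n A *ᵥ v) (.inl (k, a)) = (A *ᵥ fun i => v (k.castSucc, i)) a := by
  simp only [mulVec, dotProduct, LawrenceR, Sum.elim_inl, Fintype.sum_prod_type, ite_mul,
    zero_mul]
  rw [Finset.sum_comm]
  simp [Fin.sum_univ_castSucc, Fin.val_eq_val, k.isLt.ne']

theorem lawrenceR_mulVec_inr (r : ℕ) (A : Matrix (Fin m) (Fin n) ℤ) (v : Fin r × Fin n → ℤ)
    (i : Fin n) :
    (LawrenceR r m n A *ᵥ v) (.inr i) = ∑ q, v (q, i) := by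
  simp [mulVec, dotProduct, LawrenceR, Fintype.sum_prod_type]

theorem lawrenceR_mulVec_eq_zero_iff (A : Matrix (Fin m) (Fin n) ℤ)
    (v : Fin (s + 1) × Fin n → ℤ) :
    LawrenceR (s + 1) m n A *ᵥ v = 0 ↔
      (∀ k : Fin s, A *ᵥ (fun i => v (k.castSucc, i)) = 0) ∧ ∀ i, ∑ q, v (q, i) = 0 := by
  simp only [funext_iff, Sum.forall, Prod.forall, lawrenceR_mulVec_inl, lawrenceR_mulVec_inr,
    Pi.zero_apply]
  -- the two sides differ only by `Fin (s + 1 - 1)` versus `Fin s`, which agree after unfolding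
  rfl

theorem brCol_castSucc (B : Matrix (Fin n) (Fin l) ℤ) (k q : Fin s) (j : Fin l) (i : Fin n) :
    BrCol (r := s + 1) B k j (q.castSucc, i) = if q = k then B i j else 0 := by
  simp [BrCol, Fin.ext_iff, q.isLt.ne]

theorem brCol_last (B : Matrix (Fin n) (Fin l) ℤ) (k : Fin s) (j : Fin l) (i : Fin n) :
    BrCol (r := s + 1) B k j (Fin.last s, i) = -B i j := by
  simp [BrCol, k.isLt.ne']

theorem sum_mul_brCol_castSucc (B : Matrix (Fin n) (Fin l) ℤ) (c : Fin s × Fin l → ℤ)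
    (q : Fin s) (i : Fin n) :
    ∑ p : Fin s × Fin l, c p * BrCol (r := s + 1) B p.1 p.2 (q.castSucc, i) =
      ∑ j, c (q, j) * B i j := by
  simp [Fintype.sum_prod_type, brCol_castSucc]

theorem sum_mul_brCol_last (B : Matrix (Fin n) (Fin l) ℤ) (c : Fin s × Fin l → ℤ) (i : Fin n) :
    ∑ p : Fin s × Fin l, c p * BrCol (r := s + 1) B p.1 p.2 (Fin.last s, i) =
      -∑ p : Fin s × Fin l, c p * B i p.2 := by
  simp [brCol_last]

theorem lawrenceR_mulVec_brCol {A : Matrix (Fin m) (Fin n) ℤ} {B : Matrix (Fin n) (Fin l) ℤ}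
    {j : Fin l} (hj : A *ᵥ (fun i => B i j) = 0) (k : Fin s) :
    LawrenceR (s + 1) m n A *ᵥ BrCol B k j = 0 := by
  refine (lawrenceR_mulVec_eq_zero_iff A _).2 ⟨fun q => ?_, fun i => ?_⟩
  · by_cases h : q = k
    · simpa [brCol_castSucc, h] using hj
    · simp [brCol_castSucc, h, ← Pi.zero_def]
  · simp [Fin.sum_univ_castSucc, brCol_castSucc, brCol_last]

theorem exists_eq_sum_mul_brCol_of_lawrenceR_mulVec_eq_zero {A : Matrix (Fin m) (Fin n) ℤ}
    {B : Matrix (Fin n) (Fin l) ℤ}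
    (hgen : ∀ z : Fin n → ℤ, A *ᵥ z = 0 → ∃ c : Fin l → ℤ, z = fun i => ∑ j, c j * B i j)
    {z : Fin (s + 1) × Fin n → ℤ} (hz : LawrenceR (s + 1) m n A *ᵥ z = 0) :
    ∃ c : Fin s × Fin l → ℤ,
      z = fun q => ∑ p : Fin s × Fin l, c p * BrCol (r := s + 1) B p.1 p.2 q := by
  obtain ⟨hblock, hsum⟩ := (lawrenceR_mulVec_eq_zero_iff A z).1 hz
  choose c hc using fun k => hgen _ (hblock k)
  refine ⟨fun p => c p.1 p.2, funext fun ⟨q, i⟩ => ?_⟩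
  induction q using Fin.lastCases with
  | cast q => rw [sum_mul_brCol_castSucc]; exact congrFun (hc q) i
  | last =>
    have hlast : z (Fin.last s, i) = -∑ k : Fin s, z (k.castSucc, i) := by
      have := hsum i
      rw [Fin.sum_univ_castSucc] at this
      exact eq_neg_of_add_eq_zero_right this
    rw [sum_mul_brCol_last, hlast, Fintype.sum_prod_type]
    simp only [fun k => congrFun (hc k) i]

end

theorem lattice_basis_higher_lawrence_general (r m n l : ℕ)
    (A : Matrix (Fin m) (Fin n) ℤ) (B : Matrix (Fin n) (Fin l) ℤ)
    (hker : ∀ j : Fin l, A.mulVec (fun i => B i j) = 0)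
    (hgen : ∀ z : Fin n → ℤ, A.mulVec z = 0 →
      ∃ c : Fin l → ℤ, z = fun i => ∑ j : Fin l, c j * B i j) :
    (∀ (k : Fin (r - 1)) (j : Fin l),
      (LawrenceR r m n A).mulVec (BrCol B k j) = 0) ∧
    (∀ z : Fin r × Fin n → ℤ, (LawrenceR r m n A).mulVec z = 0 →
      ∃ c : Fin (r - 1) × Fin l → ℤ,
        z = fun q => ∑ p : Fin (r - 1) × Fin l, c p * BrCol B p.1 p.2 q) := by
  cases r with
  | zero => exact ⟨fun k => k.elim0, fun z _ => ⟨0, funext fun q => q.1.elim0⟩⟩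
  | succ s =>
    exact ⟨fun k j => lawrenceR_mulVec_brCol (hker j) k,
      fun z hz => exists_eq_sum_mul_brCol_of_lawrenceR_mulVec_eq_zero hgen hz⟩

/-- If the columns of `B` form a lattice basis of `ker_Z A`, then the columns
of `B^(r)` form a lattice basis of the integer kernel of the `r`-th Lawrence configuration. -/
theorem lattice_basis_higher_lawrence (r m n l : ℕ) (hr : 2 ≤ r)
    (A : Matrix (Fin m) (Fin n) ℤ) (B : Matrix (Fin n) (Fin l) ℤ)
    (hker : ∀ j : Fin l, A.mulVec (fun i => B i j) = 0)
    (hgen : ∀ z : Fin n → ℤ, A.mulVec z = 0 →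
      ∃ c : Fin l → ℤ, z = fun i => ∑ j : Fin l, c j * B i j) :
    (∀ (k : Fin (r - 1)) (j : Fin l),
      (LawrenceR r m n A).mulVec (BrCol B k j) = 0) ∧
    (∀ z : Fin r × Fin n → ℤ, (LawrenceR r m n A).mulVec z = 0 →
      ∃ c : Fin (r - 1) × Fin l → ℤ,
        z = fun q => ∑ p : Fin (r - 1) × Fin l, c p * BrCol B p.1 p.2 q) :=
  lattice_basis_higher_lawrence_general r m n l A B hker hgen
end

section
/- Let A be an integer matrix and let L = {z1, ..., zK} be a lattice basis of ker_Z(A). Suppose x and y are nonnegative integer vectors with Ax = Ay. If every coordinate of x is sufficiently large (specifically, at least the sum over the moves used, of the absolute values of the corresponding coordinates), then there is a path x = x_0, x_1, ..., x_m = y such that each x_j is a nonnegative integer vector with A x_j = Ax and each step x_{j+1} - x_j is ± an element of L. Concretely: if y - x = Σ_{k=1}^K α_k z_k with α_k ∈ Z, and for every coordinate i we have x(i) ≥ Σ_k |α_k| |z_k(i)|, then such a connecting path of nonnegative tables exists. -/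
/-!
Write `y - x = Σ α_k z_k` as a sum of `Σ_k |α_k|` unit moves `± z_k` and perform them in any
order. Each intermediate point differs from `x` by some of these moves, which together lower
coordinate `i` by at most `Σ_k |α_k| |z_k(i)| ≤ x(i)`, so it stays nonnegative; it stays in the
fiber because every move lies in `ker A`.
-/

open Relation

namespace Relation.ReflTransGen

variable {α : Type*} {r : α → α → Prop} {a b : α}

theorem exists_fin_path (h : ReflTransGen r a b) :
    ∃ (N : ℕ) (p : Fin (N + 1) → α), p 0 = a ∧ p (Fin.last N) = b ∧
      (∀ j, ReflTransGen r a (p j)) ∧ ∀ j : Fin N, r (p j.castSucc) (p j.succ) := by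
  induction h using head_induction_on with
  | refl => exact ⟨0, fun _ => b, rfl, rfl, fun _ => .refl, Fin.elim0⟩
  | @head a c hac _ ih =>
    obtain ⟨N, p, hp0, hpN, hreach, hstep⟩ := ih
    refine ⟨N + 1, Fin.cons a p, rfl, by simpa using hpN, Fin.cases .refl ?_, Fin.cases ?_ ?_⟩
    · exact fun j => by simpa using (hreach j).head hac
    · simpa [hp0] using hac
    · exact fun j => by simpa [← Fin.succ_castSucc] using hstep j

end Relation.ReflTransGen

section UnitMoves

variable {G κ : Type*} [AddCommGroup G] [Fintype κ] (L : κ → G) (α : κ → ℤ)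

def unitMoves : Multiset G :=
  ∑ k, (Multiset.replicate (α k).toNat (L k) + Multiset.replicate (-α k).toNat (-L k))

theorem mem_unitMoves {m : G} (hm : m ∈ unitMoves L α) : ∃ k, m = L k ∨ m = -L k := by
  obtain ⟨k, -, hk⟩ := Multiset.mem_sum.mp hm
  rcases Multiset.mem_add.mp hk with h | h <;> exact ⟨k, by simp [Multiset.eq_of_mem_replicate h]⟩

theorem sum_unitMoves : (unitMoves L α).sum = ∑ k, α k • L k := by
  refine (Multiset.sum_sum _ _).trans (Finset.sum_congr rfl fun k _ => ?_)
  rw [Multiset.sum_add, Multiset.sum_replicate, Multiset.sum_replicate, smul_neg, ← sub_eq_add_neg,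
    ← natCast_zsmul, ← natCast_zsmul, ← sub_smul, Int.toNat_sub_toNat_neg]

theorem sum_map_abs_unitMoves [Lattice G] :
    ((unitMoves L α).map abs).sum = ∑ k, |α k| • |L k| := by
  refine (congrArg Multiset.sum (map_sum (Multiset.mapAddMonoidHom abs) _ Finset.univ)).trans ?_
  refine (Multiset.sum_sum _ _).trans (Finset.sum_congr rfl fun k _ => ?_)
  simp only [Multiset.mapAddMonoidHom_apply, Multiset.map_add, Multiset.map_replicate, abs_neg,
    Multiset.sum_add, Multiset.sum_replicate]
  rw [← add_nsmul, Int.toNat_add_toNat_neg_eq_natAbs, ← natCast_zsmul, Int.natCast_natAbs]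

end UnitMoves

section NonnegMove

variable {G : Type*} [AddCommGroup G] [Lattice G] {M : Set G}

def NonnegMove (M : Set G) (u v : G) : Prop := 0 ≤ v ∧ v - u ∈ M

theorem nonneg_of_reflTransGen_nonnegMove {x v : G} (h : ReflTransGen (NonnegMove M) x v)
    (hx : 0 ≤ x) : 0 ≤ v := by
  rcases h.cases_tail with rfl | ⟨_, _, hstep⟩
  exacts [hx, hstep.1]

theorem map_eq_of_reflTransGen_nonnegMove {H F : Type*} [AddCommGroup H] [FunLike F G H]
    [AddMonoidHomClass F G H] {f : F} (hM : ∀ m ∈ M, f m = 0) {x v : G}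
    (h : ReflTransGen (NonnegMove M) x v) : f v = f x := by
  induction h with
  | refl => rfl
  | @tail u w _ huw ih => rw [← sub_add_cancel w u, map_add, hM _ huw.2, zero_add, ih]

theorem reflTransGen_nonnegMove_add_sum [IsOrderedAddMonoid G] {ms : Multiset G}
    (hms : ∀ m ∈ ms, m ∈ M) {x : G} (hx : (ms.map abs).sum ≤ x) :
    ReflTransGen (NonnegMove M) x (x + ms.sum) := by
  induction ms using Multiset.induction_on generalizing x with
  | empty => simpa using ReflTransGen.refl
  | cons m ms ih =>
    rw [Multiset.map_cons, Multiset.sum_cons] at hx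
    have hrest : (ms.map abs).sum ≤ x + m :=
      calc (ms.map abs).sum ≤ x - |m| := le_sub_iff_add_le'.mpr hx
        _ = x + -|m| := sub_eq_add_neg x |m|
        _ ≤ x + m := add_le_add_right (neg_le.mp (neg_le_abs m)) x
    have hnonneg : 0 ≤ x + m :=
      (Multiset.sum_nonneg fun _ ha => by
        obtain ⟨a, _, rfl⟩ := Multiset.mem_map.mp ha; exact abs_nonneg a).trans hrest
    rw [Multiset.sum_cons, ← add_assoc]
    refine .head ⟨hnonneg, ?_⟩ (ih (fun a ha => hms a (Multiset.mem_cons_of_mem ha)) hrest)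
    simpa using hms m (Multiset.mem_cons_self m ms)

theorem reflTransGen_nonnegMove_add_sum_smul [IsOrderedAddMonoid G] {κ : Type*} [Fintype κ]
    (L : κ → G) (α : κ → ℤ) {x : G} (hx : ∑ k, |α k| • |L k| ≤ x) :
    ReflTransGen (NonnegMove {m | ∃ k, m = L k ∨ m = -L k}) x (x + ∑ k, α k • L k) := by
  rw [← sum_unitMoves]
  exact reflTransGen_nonnegMove_add_sum (fun m => mem_unitMoves L α)
    ((sum_map_abs_unitMoves L α).trans_le hx)

end NonnegMove

theorem lattice_basis_path_general (m n K : ℕ) (A : Matrix (Fin m) (Fin n) ℤ)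
    (L : Fin K → (Fin n → ℤ)) (hL : ∀ k, A.mulVec (L k) = 0)
    (x y : Fin n → ℤ) (hx : ∀ i, 0 ≤ x i)
    (α : Fin K → ℤ) (hα : ∀ i, y i - x i = ∑ k, α k * L k i)
    (hbig : ∀ i, ∑ k, |α k| * |L k i| ≤ x i) :
    ∃ (N : ℕ) (p : Fin (N + 1) → Fin n → ℤ),
      p 0 = x ∧ p (Fin.last N) = y ∧
      (∀ j, (∀ i, 0 ≤ p j i) ∧ A.mulVec (p j) = A.mulVec x) ∧
      ∀ j : Fin N, ∃ k, (∀ i, p j.succ i - p j.castSucc i = L k i) ∨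
        (∀ i, p j.succ i - p j.castSucc i = -L k i) := by
  have hy : y = x + ∑ k, α k • L k := by
    funext i
    simp only [Pi.add_apply, Finset.sum_apply, Pi.smul_apply, smul_eq_mul]
    linarith [hα i]
  have hbudget : ∑ k, |α k| • |L k| ≤ x := fun i => by
    simpa [Finset.sum_apply] using hbig i
  have hkernel : ∀ v ∈ {v | ∃ k, v = L k ∨ v = -L k}, A.mulVecLin v = 0 := by
    rintro _ ⟨k, rfl | rfl⟩ <;> simp [Matrix.mulVec_neg, hL k]
  obtain ⟨N, p, hp0, hpN, hreach, hstep⟩ :=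
    (reflTransGen_nonnegMove_add_sum_smul L α hbudget).exists_fin_path
  refine ⟨N, p, hp0, hpN.trans hy.symm,
    fun j => ⟨nonneg_of_reflTransGen_nonnegMove (hreach j) hx,
      map_eq_of_reflTransGen_nonnegMove hkernel (hreach j)⟩, fun j => ?_⟩
  obtain ⟨k, hk | hk⟩ := (hstep j).2
  exacts [⟨k, .inl fun i => congrFun hk i⟩, ⟨k, .inr fun i => congrFun hk i⟩]

/-- If `x, y` are nonnegative tables in the same fiber, `y - x = Σ α_k z_k`
with the `z_k` moves of a lattice basis, and every coordinate of `x` is at least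
`Σ_k |α_k| |z_k(i)|`, then `x` and `y` are connected by a path of nonnegative tables in the
fiber whose steps are `±` elements of the lattice basis. -/
theorem lattice_basis_path (m n K : ℕ) (A : Matrix (Fin m) (Fin n) ℤ)
    (L : Fin K → (Fin n → ℤ)) (hL : ∀ k, A.mulVec (L k) = 0)
    (x y : Fin n → ℤ) (hx : ∀ i, 0 ≤ x i) (hy : ∀ i, 0 ≤ y i)
    (hfiber : A.mulVec x = A.mulVec y)
    (α : Fin K → ℤ) (hα : ∀ i, y i - x i = ∑ k, α k * L k i)
    (hbig : ∀ i, ∑ k, |α k| * |L k i| ≤ x i) :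
    ∃ (N : ℕ) (p : Fin (N + 1) → Fin n → ℤ),
      p 0 = x ∧ p (Fin.last N) = y ∧
      (∀ j, (∀ i, 0 ≤ p j i) ∧ A.mulVec (p j) = A.mulVec x) ∧
      ∀ j : Fin N, ∃ k, (∀ i, p j.succ i - p j.castSucc i = L k i) ∨
        (∀ i, p j.succ i - p j.castSucc i = -L k i) :=
  lattice_basis_path_general m n K A L hL x y hx α hα hbig
end

section
/- Let A be the configuration of the no-three-factor interaction model for I × J × K tables, mapping a table x ∈ Z^{I×J×K} to its three two-way marginals (x_{ij+}, x_{+jk}, x_{i+k}). Then the degree-four moves which place a 2×2 basic move pattern (+1,-1;-1,+1) in one slice k and its negative in another slice k' form a lattice basis of ker_Z(A): every integer table whose three two-way marginals all vanish is an integer linear combination of such moves. -/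
open Matrix BigOperators

/-- The degree-four move `z(i,i';j,j';k,k')`: a `2×2` basic move pattern in slice `k` and
its negative in slice `k'`. -/
def move4 {I J K : ℕ} (i i' : Fin I) (j j' : Fin J) (k k' : Fin K) :
    Fin I → Fin J → Fin K → ℤ :=
  fun a b c =>
    ((if c = k then 1 else 0) - (if c = k' then 1 else 0)) *
      ((if a = i ∧ b = j then 1 else 0) + (if a = i' ∧ b = j' then 1 else 0)
        - (if a = i ∧ b = j' then 1 else 0) - (if a = i' ∧ b = j then 1 else 0))

/-!
With a base row `i₀`, column `j₀` and slice `k₀` fixed, every table `x` with vanishing two-way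
marginals equals `∑ x_{ijk} z(i,i₀; j,j₀; k,k₀)`: summing over `k` first leaves `x_{ijc}` in
slice `c` because `x_{ij+} = 0`, and the remaining `2×2` expansion collapses to `x_{abc}` because
`x_{+jc} = x_{i+c} = 0`.
-/

open Finset

section Moves

variable {α β γ : Type*} [DecidableEq α] [DecidableEq β] [DecidableEq γ]

def sliceDiff (k k' : γ) (c : γ) : ℤ :=
  (if c = k then 1 else 0) - (if c = k' then 1 else 0)

def basicMove (i i' : α) (j j' : β) (a : α) (b : β) : ℤ :=
  (if a = i ∧ b = j then 1 else 0) + (if a = i' ∧ b = j' then 1 else 0)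
    - (if a = i ∧ b = j' then 1 else 0) - (if a = i' ∧ b = j then 1 else 0)

theorem sum_sliceDiff [Fintype γ] (k k' : γ) : ∑ c, sliceDiff k k' c = 0 := by
  simp [sliceDiff, sum_sub_distrib]

theorem sum_basicMove_left [Fintype α] (i i' : α) (j j' : β) (b : β) :
    ∑ a, basicMove i i' j j' a b = 0 := by
  simp [basicMove, ite_and, sum_sub_distrib, sum_add_distrib]

theorem sum_basicMove_right [Fintype β] (i i' : α) (j j' : β) (a : α) :
    ∑ b, basicMove i i' j j' a b = 0 := by
  simp [basicMove, ite_and, sum_sub_distrib, sum_add_distrib]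

theorem sum_mul_sliceDiff [Fintype γ] {w : γ → ℤ} (hw : ∑ k, w k = 0) (k₀ c : γ) :
    ∑ k, w k * sliceDiff k k₀ c = w c := by
  simp [sliceDiff, mul_sub, sum_sub_distrib, hw]

theorem sum_sum_mul_basicMove [Fintype α] [Fintype β] {y : α → β → ℤ}
    (hcol : ∀ b, ∑ a, y a b = 0) (hrow : ∀ a, ∑ b, y a b = 0) (i₀ : α) (j₀ : β) (a : α) (b : β) :
    ∑ i, ∑ j, y i j * basicMove i i₀ j j₀ a b = y a b := by
  simp [basicMove, mul_add, mul_sub, sum_add_distrib, sum_sub_distrib, ite_and, hrow, hcol]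

theorem eq_sum_mul_sliceDiff_mul_basicMove [Fintype α] [Fintype β] [Fintype γ]
    {z : α → β → γ → ℤ}
    (hab : ∀ a b, ∑ c, z a b c = 0) (hbc : ∀ b c, ∑ a, z a b c = 0)
    (hac : ∀ a c, ∑ b, z a b c = 0) (i₀ : α) (j₀ : β) (k₀ : γ) (a : α) (b : β) (c : γ) :
    z a b c = ∑ i, ∑ j, ∑ k, z i j k * (sliceDiff k k₀ c * basicMove i i₀ j j₀ a b) := by
  calc z a b c = ∑ i, ∑ j, z i j c * basicMove i i₀ j j₀ a b :=
        (sum_sum_mul_basicMove (hbc · c) (hac · c) i₀ j₀ a b).symm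
    _ = ∑ i, ∑ j, (∑ k, z i j k * sliceDiff k k₀ c) * basicMove i i₀ j j₀ a b := by
        simp only [sum_mul_sliceDiff (hab _ _)]
    _ = _ := by simp only [sum_mul, mul_assoc]

end Moves

theorem move4_eq {I J K : ℕ} (i i' : Fin I) (j j' : Fin J) (k k' : Fin K) :
    move4 i i' j j' k k' = fun a b c => sliceDiff k k' c * basicMove i i' j j' a b :=
  rfl

/-- The degree-four moves form a lattice basis of the integer kernel of the
no-three-factor interaction configuration: each such move has vanishing two-way marginals,
and every integer three-way table with vanishing two-way marginals is an integer linear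
combination of degree-four moves. -/
theorem degree_four_lattice_basis (I J K : ℕ) :
    (∀ (i i' : Fin I) (j j' : Fin J) (k k' : Fin K),
      (∀ a b, ∑ c, move4 i i' j j' k k' a b c = 0) ∧
      (∀ b c, ∑ a, move4 i i' j j' k k' a b c = 0) ∧
      (∀ a c, ∑ b, move4 i i' j j' k k' a b c = 0)) ∧
    (∀ z : Fin I → Fin J → Fin K → ℤ,
      (∀ a b, ∑ c, z a b c = 0) → (∀ b c, ∑ a, z a b c = 0) → (∀ a c, ∑ b, z a b c = 0) →
      ∃ c : Fin I × Fin I × Fin J × Fin J × Fin K × Fin K → ℤ,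
        z = fun a b c' => ∑ p : Fin I × Fin I × Fin J × Fin J × Fin K × Fin K,
          c p * move4 p.1 p.2.1 p.2.2.1 p.2.2.2.1 p.2.2.2.2.1 p.2.2.2.2.2 a b c') := by
  refine ⟨fun i i' j j' k k' => ⟨fun a b => ?_, fun b c => ?_, fun a c => ?_⟩,
    fun z hab hbc hac => ?_⟩
  · simp only [move4_eq, ← sum_mul, sum_sliceDiff, zero_mul]
  · simp only [move4_eq, ← mul_sum, sum_basicMove_left, mul_zero]
  · simp only [move4_eq, ← mul_sum, sum_basicMove_right, mul_zero]
  by_cases hne : Nonempty (Fin I) ∧ Nonempty (Fin J) ∧ Nonempty (Fin K)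
  swap
  · exact ⟨0, funext₃ fun a b c => absurd ⟨⟨a⟩, ⟨b⟩, ⟨c⟩⟩ hne⟩
  obtain ⟨⟨i₀⟩, ⟨j₀⟩, ⟨k₀⟩⟩ := hne
  let e : Fin I × Fin J × Fin K → Fin I × Fin I × Fin J × Fin J × Fin K × Fin K :=
    fun x => (x.1, i₀, x.2.1, j₀, x.2.2, k₀)
  have he : e.Injective := fun x y hxy => by
    simp only [e, Prod.mk.injEq] at hxy
    exact Prod.ext hxy.1 (Prod.ext hxy.2.2.1 hxy.2.2.2.2.1)
  refine ⟨Function.extend e (fun x => z x.1 x.2.1 x.2.2) 0, funext₃ fun a b c => ?_⟩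
  rw [eq_sum_mul_sliceDiff_mul_basicMove hab hbc hac i₀ j₀ k₀ a b c]
  simp only [← Fintype.sum_prod_type']
  refine Fintype.sum_of_injective e he _ _ (fun p hp => ?_) (fun x => ?_)
  · rw [Function.extend_apply' _ _ _ hp, Pi.zero_apply, zero_mul]
  · rw [he.extend_apply, move4_eq]
end

section
/- Let B be an integer n × d matrix whose columns form a lattice basis of ker_Z(A), and consider the r-th Lawrence configuration Λ^(r)(A). For r = 3, the columns of the symmetric matrix [[B, B, 0], [-B, 0, B], [0, -B, -B]] form a lattice basis of ker_Z(Λ^(3)(A)). -/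
/-!
`Λ^(3)(A) z = 0` says exactly that the first two blocks `z₀, z₁` of `z` lie in `ker A` and that
the three blocks sum to zero. Writing `z₀ = B c₀` and `z₁ = B c₁`, the coefficients
`(c₀, 0, c₀ + c₁)` express `z` in the columns `(B, -B, 0)`, `(B, 0, -B)`, `(0, B, -B)`.
-/

open Matrix BigOperators

/-- The third Lawrence configuration of `A`: block rows `(A,0,0)`, `(0,A,0)`, `(I,I,I)`. -/
def Lawrence3 (m n : ℕ) (A : Matrix (Fin m) (Fin n) ℤ) :
    Matrix ((Fin 2 × Fin m) ⊕ Fin n) (Fin 3 × Fin n) ℤ :=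
  fun p q =>
    Sum.elim (fun ka : Fin 2 × Fin m =>
        if (q.1 : ℕ) = (ka.1 : ℕ) then A ka.2 q.2 else 0)
      (fun i : Fin n => if q.2 = i then 1 else 0) p

/-- Column `(s, j)` of the symmetric matrix `[[B,B,0],[-B,0,B],[0,-B,-B]]`. -/
def symCol {n l : ℕ} (B : Matrix (Fin n) (Fin l) ℤ) (s : Fin 3) (j : Fin l) :
    Fin 3 × Fin n → ℤ :=
  fun q =>
    (if (q.1 : ℕ) = (if (s : ℕ) = 2 then 1 else 0) then B q.2 j else 0)
      - (if (q.1 : ℕ) = (if (s : ℕ) = 0 then 1 else 2) then B q.2 j else 0)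

section

variable {m n l : ℕ}

lemma lawrence3_mulVec_uncurry (A : Matrix (Fin m) (Fin n) ℤ) (x y w : Fin n → ℤ) :
    Lawrence3 m n A *ᵥ Function.uncurry ![x, y, w] =
      Sum.elim (fun ka => (A *ᵥ ![x, y] ka.1) ka.2) (x + y + w) := by
  ext (⟨k, a⟩ | i)
  · fin_cases k <;>
      simp [mulVec, dotProduct, Lawrence3, Fintype.sum_prod_type, Fin.sum_univ_three]
  · simp [mulVec, dotProduct, Lawrence3, Fintype.sum_prod_type, Fin.sum_univ_three, add_assoc]

lemma lawrence3_mulVec_uncurry_eq_zero_iff (A : Matrix (Fin m) (Fin n) ℤ) (x y w : Fin n → ℤ) :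
    Lawrence3 m n A *ᵥ Function.uncurry ![x, y, w] = 0 ↔
      A *ᵥ x = 0 ∧ A *ᵥ y = 0 ∧ x + y + w = 0 := by
  simp only [lawrence3_mulVec_uncurry, funext_iff, Sum.forall, Prod.forall, Fin.forall_fin_two]
  simp [and_assoc]

lemma eq_uncurry_rows (z : Fin 3 × Fin n → ℤ) :
    z = Function.uncurry ![fun i => z (0, i), fun i => z (1, i), fun i => z (2, i)] := by
  ext ⟨k, i⟩
  fin_cases k <;> rfl

lemma symCol_zero (B : Matrix (Fin n) (Fin l) ℤ) (j : Fin l) :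
    symCol B 0 j = Function.uncurry ![Bᵀ j, -Bᵀ j, 0] := by
  ext ⟨k, i⟩
  fin_cases k <;> simp [symCol]

lemma symCol_one (B : Matrix (Fin n) (Fin l) ℤ) (j : Fin l) :
    symCol B 1 j = Function.uncurry ![Bᵀ j, 0, -Bᵀ j] := by
  ext ⟨k, i⟩
  fin_cases k <;> simp [symCol]

lemma symCol_two (B : Matrix (Fin n) (Fin l) ℤ) (j : Fin l) :
    symCol B 2 j = Function.uncurry ![(0 : Fin n → ℤ), Bᵀ j, -Bᵀ j] := by
  ext ⟨k, i⟩
  fin_cases k <;> simp [symCol]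

lemma sum_mul_symCol (B : Matrix (Fin n) (Fin l) ℤ) (c : Fin 3 × Fin l → ℤ) :
    (fun q => ∑ p : Fin 3 × Fin l, c p * symCol B p.1 p.2 q) =
      Function.uncurry ![B *ᵥ (c.curry 0 + c.curry 1), B *ᵥ (c.curry 2 - c.curry 0),
        -(B *ᵥ (c.curry 1 + c.curry 2))] := by
  ext ⟨k, i⟩
  simp only [Fintype.sum_prod_type, Fin.sum_univ_three, symCol_zero, symCol_one, symCol_two]
  fin_cases k <;>
    simp [mulVec, dotProduct, Finset.sum_add_distrib, mul_add, mul_sub, mul_comm] <;> ring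
end

/-- If the columns of `B` form a lattice basis of `ker_Z A`, then the columns
of `[[B,B,0],[-B,0,B],[0,-B,-B]]` form a lattice basis of the integer kernel of the third
Lawrence configuration `Λ^(3)(A)`. -/
theorem symmetric_lattice_basis_lawrence3 (m n l : ℕ)
    (A : Matrix (Fin m) (Fin n) ℤ) (B : Matrix (Fin n) (Fin l) ℤ)
    (hker : ∀ j : Fin l, A.mulVec (fun i => B i j) = 0)
    (hgen : ∀ z : Fin n → ℤ, A.mulVec z = 0 →
      ∃ c : Fin l → ℤ, z = fun i => ∑ j : Fin l, c j * B i j) :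
    (∀ (s : Fin 3) (j : Fin l), (Lawrence3 m n A).mulVec (symCol B s j) = 0) ∧
    (∀ z : Fin 3 × Fin n → ℤ, (Lawrence3 m n A).mulVec z = 0 →
      ∃ c : Fin 3 × Fin l → ℤ,
        z = fun q => ∑ p : Fin 3 × Fin l, c p * symCol B p.1 p.2 q) := by
  have hspan : ∀ x, A *ᵥ x = 0 → ∃ c, B *ᵥ c = x := fun x hx =>
    (hgen x hx).imp fun c hc => by subst hc; ext i; simp [mulVec, dotProduct, mul_comm]
  refine ⟨fun s j => ?_, fun z hz => ?_⟩
  · have hBj : A *ᵥ Bᵀ j = 0 := hker j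
    fin_cases s <;>
      simp [symCol_zero, symCol_one, symCol_two, lawrence3_mulVec_uncurry_eq_zero_iff,
        mulVec_neg, hBj]
  · rw [eq_uncurry_rows z, lawrence3_mulVec_uncurry_eq_zero_iff] at hz
    obtain ⟨h0, h1, hsum⟩ := hz
    obtain ⟨c0, hc0⟩ := hspan _ h0
    obtain ⟨c1, hc1⟩ := hspan _ h1
    refine ⟨Function.uncurry ![c0, 0, c0 + c1], ?_⟩
    have hz2 : (fun i => z (2, i)) = -(B *ᵥ c0 + B *ᵥ c1) := by
      rw [hc0, hc1]; exact eq_neg_of_add_eq_zero_right hsum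
    rw [sum_mul_symCol, eq_uncurry_rows z, hz2, ← hc0, ← hc1]
    simp [mulVec_add]
end

section
/- For the binomial (r = 2) logistic regression model with one equally spaced covariate taking J levels, the integer kernel of the configuration is generated as a lattice by the degree-four moves: for indices i2 < i2 + k ≤ i2' - k < i2' in {1,...,J}, the move with entries +1 at (1, i2), (2, i2+k), (2, i2'-k), (1, i2'), and -1 at (2, i2), (1, i2+k), (1, i2'-k), (2, i2'). Equivalently, every 2 × J integer table z such that every column sums to zero, Σ_j z(1,j) = 0, and Σ_j j·z(1,j) = 0 is an integer linear combination of such moves. -/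
/-!
Read the first row `v` of the table as the polynomial `p = ∑ⱼ vⱼ Xʲ`. The row sum and the
weighted row sum are `p(1)` and `p(1) + p'(1)`, so `1` is a double root of `p` and
`p = (X - 1)² q` with `deg q < J - 2`. Since `Xᵃ (X - 1)²` is the first row of the move with
positions `a, a + 1, a + 1, a + 2`, the coefficients of `q` write `v` as a combination of these
moves; the second row follows because every column sums to zero.
-/

open Matrix BigOperators

/-- The degree-four move of the binomial logistic regression model determined by the four
column positions `a = i₂ < b = i₂+k ≤ c = i₂'-k < d = i₂'`: first row `+1` at `a, d`,
`-1` at `b, c`; second row the negative of the first. -/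
def logitMove {J : ℕ} (a b c d : Fin J) : Fin 2 → Fin J → ℤ :=
  fun r j =>
    (if r = 0 then 1 else -1) *
      ((if j = a then 1 else 0) + (if j = d then 1 else 0)
        - (if j = b then 1 else 0) - (if j = c then 1 else 0))

open Polynomial Finset Function

theorem Fintype.sum_extend_zero_mul {α β M : Type*} [Fintype α] [Fintype β]
    [NonUnitalNonAssocSemiring M] {e : α → β} (he : Injective e) (f : α → M) (g : β → M) :
    ∑ b, extend e f 0 b * g b = ∑ a, f a * g (e a) := by
  refine (Fintype.sum_of_injective e he _ _ (fun b hb => ?_) fun a => ?_).symm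
  · rw [extend_apply' _ _ _ fun ⟨a, ha⟩ => hb ⟨a, ha⟩, Pi.zero_apply, zero_mul]
  · rw [he.extend_apply]

namespace Polynomial

theorem sq_X_sub_C_dvd_of_isRoot {R : Type*} [CommRing R] {p : R[X]} {t : R}
    (h₀ : p.IsRoot t) (h₁ : (derivative p).IsRoot t) : (X - C t) ^ 2 ∣ p := by
  rcases eq_or_ne p 0 with rfl | hp
  · exact dvd_zero _
  · exact (le_rootMultiplicity_iff hp).1
      ((one_lt_rootMultiplicity_iff_isRoot hp).2 ⟨h₀, h₁⟩)

theorem Monic.mul_eq_sum_range_C_mul_X_pow_mul {R : Type*} [CommSemiring R] {d q : R[X]}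
    (hd : d.Monic) {n : ℕ} (hdeg : (d * q).natDegree < d.natDegree + n) :
    d * q = ∑ a ∈ range n, C (q.coeff a) * (X ^ a * d) := by
  rcases eq_or_ne q 0 with rfl | hq
  · simp
  rw [hd.natDegree_mul' hq, Nat.add_lt_add_iff_left] at hdeg
  conv_lhs => rw [q.as_sum_range_C_mul_X_pow' hdeg]
  rw [Finset.mul_sum]
  exact Finset.sum_congr rfl fun a _ => by ring

variable {R : Type*} [Semiring R] {n : ℕ}

theorem natDegree_sum_fin_le (f : Fin n → R) :
    (∑ i : Fin n, C (f i) * X ^ (i : ℕ)).natDegree ≤ n - 1 :=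
  natDegree_sum_le_of_forall_le _ _ fun i _ =>
    (natDegree_C_mul_X_pow_le _ _).trans (Nat.le_sub_one_of_lt i.isLt)

theorem coeff_sum_fin (f : Fin n → R) (i : Fin n) :
    (∑ j : Fin n, C (f j) * X ^ (j : ℕ)).coeff i = f i := by
  simp only [finsetSum_coeff, coeff_C_mul, coeff_X_pow, mul_ite, mul_one, mul_zero, Fin.val_inj,
    Finset.sum_ite_eq, Finset.mem_univ, if_true]

theorem sq_X_sub_one_dvd_sum_fin (v : Fin n → ℤ) (h₀ : ∑ j, v j = 0)
    (h₁ : ∑ j : Fin n, ((j : ℤ) + 1) * v j = 0) :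
    (X - C 1) ^ 2 ∣ ∑ j : Fin n, C (v j) * X ^ (j : ℕ) := by
  refine sq_X_sub_C_dvd_of_isRoot (by simpa [eval_finsetSum] using h₀) ?_
  have hsplit : ∑ j : Fin n, ((j : ℤ) + 1) * v j = ∑ j : Fin n, v j * j + ∑ j, v j := by
    rw [← Finset.sum_add_distrib]
    exact Finset.sum_congr rfl fun j _ => by ring
  simp only [IsRoot, derivative_sum, derivative_C_mul_X_pow, eval_finsetSum, eval_mul, eval_C,
    eval_pow, eval_X, one_pow, mul_one]
  linarith

end Polynomial

def consecutiveMove {J : ℕ} (a : Fin (J - 2)) : {q : Fin J × Fin J × Fin J × Fin J //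
    q.1 < q.2.1 ∧ q.2.1 ≤ q.2.2.1 ∧ q.2.2.1 < q.2.2.2 ∧
    (q.2.1 : ℕ) - (q.1 : ℕ) = (q.2.2.2 : ℕ) - (q.2.2.1 : ℕ)} :=
  ⟨(⟨a, by omega⟩, ⟨a + 1, by omega⟩, ⟨a + 1, by omega⟩, ⟨a + 2, by omega⟩), by
    simp only [Fin.mk_lt_mk, Fin.mk_le_mk]; omega⟩

theorem consecutiveMove_injective {J : ℕ} : Injective (consecutiveMove (J := J)) :=
  fun _ _ h => Fin.ext (congrArg (fun q => (q.1.1 : ℕ)) h)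

theorem logitMove_one_apply {J : ℕ} (a b c d j : Fin J) :
    logitMove a b c d 1 j = -logitMove a b c d 0 j := by
  simp [logitMove]

theorem logitMove_consecutiveMove_zero_apply {J : ℕ} (a : Fin (J - 2)) (j : Fin J) :
    logitMove (consecutiveMove a).1.1 (consecutiveMove a).1.2.1 (consecutiveMove a).1.2.2.1
      (consecutiveMove a).1.2.2.2 0 j = (X ^ (a : ℕ) * (X - C 1) ^ 2 : ℤ[X]).coeff j := by
  have hexpand : (X ^ (a : ℕ) * (X - C 1) ^ 2 : ℤ[X]) =
      X ^ (a + 2 : ℕ) - C 2 * X ^ (a + 1 : ℕ) + X ^ (a : ℕ) := by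
    simp only [map_one, map_ofNat]
    ring
  rw [hexpand]
  simp only [logitMove, Fin.isValue, ↓reduceIte, consecutiveMove, Fin.ext_iff, one_mul,
    eq_intCast, Int.cast_ofNat, coeff_add, coeff_sub, coeff_X_pow, coeff_ofNat_mul, mul_ite,
    mul_one, mul_zero]
  split_ifs <;> omega

theorem exists_eq_sum_consecutiveMove {J : ℕ} (v : Fin J → ℤ) (h₀ : ∑ j, v j = 0)
    (h₁ : ∑ j : Fin J, ((j : ℤ) + 1) * v j = 0) :
    ∃ c : Fin (J - 2) → ℤ, ∀ j, v j = ∑ a, c a * logitMove (consecutiveMove a).1.1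
      (consecutiveMove a).1.2.1 (consecutiveMove a).1.2.2.1 (consecutiveMove a).1.2.2.2 0 j := by
  obtain ⟨q, hq⟩ := sq_X_sub_one_dvd_sum_fin v h₀ h₁
  have hdeg : ((X - C 1) ^ 2 * q).natDegree < ((X - C (1 : ℤ)) ^ 2).natDegree + (J - 2) := by
    rw [← hq, natDegree_pow, natDegree_X_sub_C]
    have := natDegree_sum_fin_le v
    omega
  have hexp := hq.trans (((monic_X_sub_C 1).pow 2).mul_eq_sum_range_C_mul_X_pow_mul hdeg)
  refine ⟨fun a => q.coeff a, fun j => ?_⟩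
  have hj := congrArg (coeff · (j : ℕ)) hexp
  simp only [coeff_sum_fin] at hj
  simp only [finsetSum_coeff, coeff_C_mul] at hj
  simp only [logitMove_consecutiveMove_zero_apply]
  exact hj.trans (Fin.sum_univ_eq_sum_range _ _).symm

/-- For the binomial logistic regression model with one equally spaced
covariate with `J` levels, every `2 × J` integer table whose columns sum to zero, whose
first row sums to zero and has vanishing weighted sum `Σ_j j·z(1,j)`, is an integer linear
combination of the degree-four moves with positions `a < b ≤ c < d`, `b - a = d - c`. -/
theorem logistic_degree_four_lattice_basis (J : ℕ) (z : Fin 2 → Fin J → ℤ)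
    (hcol : ∀ j, ∑ r, z r j = 0)
    (hrow : ∑ j, z 0 j = 0)
    (hw : ∑ j : Fin J, ((j : ℤ) + 1) * z 0 j = 0) :
    ∃ c : {q : Fin J × Fin J × Fin J × Fin J //
        q.1 < q.2.1 ∧ q.2.1 ≤ q.2.2.1 ∧ q.2.2.1 < q.2.2.2 ∧
        (q.2.1 : ℕ) - (q.1 : ℕ) = (q.2.2.2 : ℕ) - (q.2.2.1 : ℕ)} → ℤ,
      z = fun r j => ∑ q, c q * logitMove q.1.1 q.1.2.1 q.1.2.2.1 q.1.2.2.2 r j := by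
  obtain ⟨c, hc⟩ := exists_eq_sum_consecutiveMove (z 0) hrow hw
  refine ⟨extend consecutiveMove c 0, funext fun r => funext fun j => ?_⟩
  rw [Fintype.sum_extend_zero_mul consecutiveMove_injective]
  fin_cases r
  · exact hc j
  · have hz₁ : z 1 j = -z 0 j := by linarith [Fin.sum_univ_two (z · j) ▸ hcol j]
    simp only [Fin.mk_one, logitMove_one_apply, mul_neg, Finset.sum_neg_distrib, hz₁, hc j]
end

section
/- Let A be a 1 × J integer matrix with entries A_{1j} = j for j = 1, ..., J (Poisson regression type configuration with intercept omitted), augmented with a row of ones, i.e., the configuration A' with rows (1,...,1) and (1,2,...,J). Then the moves z_j = e_j - 2e_{j+1} + e_{j+2} for j = 1, ..., J-2 form a lattice basis of ker_Z(A'): every integer vector z ∈ Z^J with Σ_j z_j = 0 and Σ_j j·z_j = 0 is an integer linear combination of the z_j. -/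
/-!
Extend `z` by zero to `ℕ` and let `D` be its discrete second antiderivative, so `D 0 = D 1 = 0`
and `D (i + 2) - 2 D (i + 1) + D i = z i`. For `n ≥ J` one has
`D n = n ∑ z i - ∑ (i + 1) z i`, so the two kernel equations say exactly that `D` vanishes from
`J` on. Then `z = ∑_j D (j + 2) z_j`, because the `i`-th entry of the right-hand side is the second
difference of `D` at `i`.
-/

open Matrix BigOperators

/-- The move `z_j = e_j - 2 e_{j+1} + e_{j+2}` of the Poisson regression configuration. -/
def poissonMove {J : ℕ} (j : Fin (J - 2)) : Fin J → ℤ :=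
  fun i =>
    (if (i : ℕ) = (j : ℕ) then 1 else 0) - 2 * (if (i : ℕ) = (j : ℕ) + 1 then 1 else 0)
      + (if (i : ℕ) = (j : ℕ) + 2 then 1 else 0)

open Finset

lemma sum_mul_poissonMove {J : ℕ} (w : ℕ → ℤ) (j : Fin (J - 2)) :
    ∑ i : Fin J, w i * poissonMove j i = w j - 2 * w (j + 1) + w (j + 2) := by
  have hj : (j : ℕ) + 2 < J := by omega
  simp only [poissonMove]
  rw [Fin.sum_univ_eq_sum_range (fun i => w i * ((if i = (j : ℕ) then 1 else 0)
    - 2 * (if i = (j : ℕ) + 1 then 1 else 0) + (if i = (j : ℕ) + 2 then 1 else 0))) J]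
  simp only [mul_add, mul_sub, mul_ite, mul_one, mul_zero, sum_add_distrib, sum_sub_distrib,
    sum_ite_eq', mem_range]
  rw [if_pos (by omega), if_pos (by omega), if_pos (by omega)]
  ring

/-- The closed form of `∑_{m < n} ∑_{i < m} Z i`. -/
def doublePartialSum (Z : ℕ → ℤ) (n : ℕ) : ℤ :=
  ∑ i ∈ range n, ((n : ℤ) - 1 - i) * Z i

namespace doublePartialSum

variable (Z : ℕ → ℤ)

@[simp] lemma zero : doublePartialSum Z 0 = 0 := by simp [doublePartialSum]

@[simp] lemma one : doublePartialSum Z 1 = 0 := by simp [doublePartialSum]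

lemma succ_sub (n : ℕ) :
    doublePartialSum Z (n + 1) - doublePartialSum Z n = ∑ i ∈ range n, Z i := by
  rw [doublePartialSum, doublePartialSum, sum_range_succ, add_sub_right_comm, ← sum_sub_distrib]
  push_cast
  rw [add_sub_cancel_right, sub_self, zero_mul, add_zero]
  exact sum_congr rfl fun i _ => by ring

lemma add_two_sub_two_mul_add (n : ℕ) :
    doublePartialSum Z (n + 2) - 2 * doublePartialSum Z (n + 1) + doublePartialSum Z n = Z n := by
  have h₁ := succ_sub Z (n + 1)
  have h₀ := succ_sub Z n
  rw [sum_range_succ] at h₁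
  linarith

lemma eq_zero_of_le {J : ℕ} (hsupp : ∀ i, J ≤ i → Z i = 0) (hsum : ∑ i ∈ range J, Z i = 0)
    (hmoment : ∑ i ∈ range J, ((i : ℤ) + 1) * Z i = 0) {n : ℕ} (hn : J ≤ n) :
    doublePartialSum Z n = 0 := by
  obtain ⟨k, rfl⟩ := Nat.exists_eq_add_of_le hn
  have htail : ∑ i ∈ range k, ((↑(J + k) : ℤ) - 1 - ↑(J + i)) * Z (J + i) = 0 :=
    sum_eq_zero fun i _ => by rw [hsupp _ (by omega), mul_zero]
  calc doublePartialSum Z (J + k)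
      = ∑ i ∈ range J, (((J + k : ℕ) : ℤ) * Z i - ((i : ℤ) + 1) * Z i) := by
        rw [doublePartialSum, sum_range_add, htail, add_zero]
        exact sum_congr rfl fun i _ => by ring
    _ = 0 := by rw [sum_sub_distrib, ← mul_sum, hsum, hmoment]; ring

end doublePartialSum

lemma sum_range_mul_ite_eq {C : ℕ → ℤ} {n : ℕ} (hC : ∀ m, m < 2 ∨ n + 2 ≤ m → C m = 0)
    (i k : ℕ) (hk : k ≤ 2) :
    ∑ j ∈ range n, C (j + 2) * (if i = j + k then 1 else 0) = C (i + 2 - k) := by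
  simp only [mul_ite, mul_one, mul_zero]
  by_cases h : k ≤ i ∧ i - k < n
  · rw [sum_eq_single (i - k), if_pos (by omega), show i - k + 2 = i + 2 - k by omega]
    · intro j _ hj; rw [if_neg (by omega)]
    · intro hi; rw [mem_range] at hi; omega
  · rw [hC _ (by omega)]
    exact sum_eq_zero fun j hj => by rw [mem_range] at hj; rw [if_neg (by omega)]

lemma sum_mul_poissonMove_apply {J : ℕ} {C : ℕ → ℤ} (hC : ∀ m, m < 2 ∨ J ≤ m → C m = 0)
    (i : Fin J) :
    ∑ j : Fin (J - 2), C (j + 2) * poissonMove j i = C (i + 2) - 2 * C (i + 1) + C i := by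
  have hC' : ∀ m, m < 2 ∨ J - 2 + 2 ≤ m → C m = 0 := fun m hm => hC m (by omega)
  simp only [poissonMove]
  rw [Fin.sum_univ_eq_sum_range (fun j => C (j + 2) * ((if (i : ℕ) = j then 1 else 0)
    - 2 * (if (i : ℕ) = j + 1 then 1 else 0) + (if (i : ℕ) = j + 2 then 1 else 0))) (J - 2)]
  simp only [mul_add, mul_sub, mul_left_comm _ (2 : ℤ), sum_add_distrib, sum_sub_distrib,
    ← mul_sum]
  have h₀ := sum_range_mul_ite_eq hC' i 0 (by norm_num)
  have h₁ := sum_range_mul_ite_eq hC' i 1 (by norm_num)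
  have h₂ := sum_range_mul_ite_eq hC' i 2 (by norm_num)
  simp only [add_zero] at h₀
  rw [h₀, h₁, h₂]
  simp

/-- The moves `z_j = e_j - 2 e_{j+1} + e_{j+2}`, `j = 1,…,J-2`, form a
lattice basis of the integer kernel of the configuration with rows `(1,…,1)` and
`(1,2,…,J)`: each move is in the kernel, and every `z ∈ ℤ^J` with `Σ_j z_j = 0` and
`Σ_j j·z_j = 0` is an integer linear combination of them. -/
theorem poisson_regression_lattice_basis (J : ℕ) :
    (∀ j : Fin (J - 2),
      (∑ i : Fin J, poissonMove j i) = 0 ∧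
      (∑ i : Fin J, ((i : ℤ) + 1) * poissonMove j i) = 0) ∧
    (∀ z : Fin J → ℤ,
      (∑ i, z i) = 0 → (∑ i : Fin J, ((i : ℤ) + 1) * z i) = 0 →
      ∃ c : Fin (J - 2) → ℤ, z = fun i => ∑ j, c j * poissonMove j i) := by
  refine ⟨fun j => ⟨?_, ?_⟩, fun z hsum hmoment => ?_⟩
  · simpa using sum_mul_poissonMove (fun _ => 1) j
  · rw [sum_mul_poissonMove (fun i => (i : ℤ) + 1) j]
    push_cast
    ring
  · set Z : ℕ → ℤ := fun n => if h : n < J then z ⟨n, h⟩ else 0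
    have hZ : ∀ i : Fin J, Z i = z i := fun i => by simp [Z]
    have hsupp : ∀ n, J ≤ n → Z n = 0 := fun n hn => by simp [Z, not_lt.mpr hn]
    have hsum' : ∑ i ∈ range J, Z i = 0 := by
      rw [← Fin.sum_univ_eq_sum_range]; simpa [hZ] using hsum
    have hmoment' : ∑ i ∈ range J, ((i : ℤ) + 1) * Z i = 0 := by
      rw [← Fin.sum_univ_eq_sum_range (fun i => ((i : ℤ) + 1) * Z i)]; simpa [hZ] using hmoment
    have hD : ∀ m, m < 2 ∨ J ≤ m → doublePartialSum Z m = 0 := by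
      rintro m (hm | hm)
      · interval_cases m <;> simp
      · exact doublePartialSum.eq_zero_of_le Z hsupp hsum' hmoment' hm
    refine ⟨fun j => doublePartialSum Z (j + 2), funext fun i => ?_⟩
    rw [sum_mul_poissonMove_apply hD, doublePartialSum.add_two_sub_two_mul_add, hZ]
end
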